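/- arXiv:1504.01785 — 14 statements merged into one kernel-verified Lean document; each statement's English description precedes it below -/
import Mathlib

section
/- A topological space X has a diagonal which is the intersection of a family of regular-closed neighborhoods of the diagonal in X² (i.e., there exists a family of open sets U_i ⊆ X² containing the diagonal Δ_X with Δ_X = ⋂ closure(U_i)) if and only if X is a Urysohn space (any two distinct points have disjoint closed neighborhoods). -/
open Set Cardinal

universe u

/-- `X` is a Urysohn space: distinct points have disjoint closed neighborhoods. -/
def IsUrysohn (X : Type u) [TopologicalSpace X] : Prop :=
  ∀ x y : X, x ≠ y → ∃ U V : Set X, IsOpen U ∧ IsOpen V ∧ x ∈ U ∧ y ∈ V ∧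
    closure U ∩ closure V = ∅

/-- `X` has a regular `G_κ`-diagonal: the diagonal is the intersection of (at most) `κ` many
open sets of `X × X` and also of their closures. -/
def HasRegularGDiagonal (X : Type u) [TopologicalSpace X] (κ : Cardinal.{u}) : Prop :=
  ∃ (ι : Type u) (W : ι → Set (X × X)), #ι ≤ κ ∧ (∀ i, IsOpen (W i)) ∧
    Set.diagonal X = ⋂ i, W i ∧ Set.diagonal X = ⋂ i, closure (W i)

/-- `𝒰` is an open cover of `X`. -/
def IsOpenCover {X : Type u} [TopologicalSpace X] (𝒰 : Set (Set X)) : Prop :=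
  (∀ U ∈ 𝒰, IsOpen U) ∧ ⋃₀ 𝒰 = Set.univ

/-- the star of a set `G` with respect to a family `𝒰`. -/
def star {X : Type u} (G : Set X) (𝒰 : Set (Set X)) : Set X :=
  ⋃₀ {U ∈ 𝒰 | (U ∩ G).Nonempty}

/-- the star of a point `x` with respect to a family `𝒰`. -/
def starPoint {X : Type u} (x : X) (𝒰 : Set (Set X)) : Set X :=
  ⋃₀ {U ∈ 𝒰 | x ∈ U}

/-- the cellularity of `X` is at most `κ`. -/
def CellularityLE (X : Type u) [TopologicalSpace X] (κ : Cardinal.{u}) : Prop :=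
  ∀ 𝒰 : Set (Set X), (∀ U ∈ 𝒰, IsOpen U ∧ U.Nonempty) →
    𝒰.PairwiseDisjoint id → #𝒰 ≤ κ

/-- the weak Lindelöf number of `X` is at most `κ`. -/
def WeakLindelofLE (X : Type u) [TopologicalSpace X] (κ : Cardinal.{u}) : Prop :=
  ∀ 𝒰 : Set (Set X), IsOpenCover 𝒰 → ∃ 𝒱 ⊆ 𝒰, #𝒱 ≤ κ ∧ Dense (⋃₀ 𝒱)

/-- the almost Lindelöf number of `X` is at most `κ`. -/
def AlmostLindelofLE (X : Type u) [TopologicalSpace X] (κ : Cardinal.{u}) : Prop :=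
  ∀ 𝒰 : Set (Set X), IsOpenCover 𝒰 →
    ∃ 𝒱 ⊆ 𝒰, #𝒱 ≤ κ ∧ ⋃ U ∈ 𝒱, closure U = Set.univ

/-- the Lindelöf number of `X` is at most `κ`. -/
def LindelofLE (X : Type u) [TopologicalSpace X] (κ : Cardinal.{u}) : Prop :=
  ∀ 𝒰 : Set (Set X), IsOpenCover 𝒰 → ∃ 𝒱 ⊆ 𝒰, #𝒱 ≤ κ ∧ ⋃₀ 𝒱 = Set.univ

/-- the character of `X` is at most `κ`. -/
def CharacterLE (X : Type u) [TopologicalSpace X] (κ : Cardinal.{u}) : Prop :=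
  ∀ x : X, ∃ B : Set (Set X), #B ≤ κ ∧ (∀ U ∈ B, IsOpen U ∧ x ∈ U) ∧
    ∀ V : Set X, IsOpen V → x ∈ V → ∃ U ∈ B, U ⊆ V

theorem statement0 {X : Type u} [TopologicalSpace X] [T1Space X] :
    (∃ (ι : Type u) (W : ι → Set (X × X)),
      (∀ i, IsOpen (W i) ∧ Set.diagonal X ⊆ W i) ∧
      Set.diagonal X = ⋂ i, closure (W i)) ↔ IsUrysohn X := by
  constructor
  · rintro ⟨ι, W, hW, hcl⟩ x y hxy
    have hxy' : (x, y) ∉ Set.diagonal X := hxy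
    rw [hcl, Set.mem_iInter] at hxy'
    push_neg at hxy'
    obtain ⟨i, hi⟩ := hxy'
    have hmem : (closure (W i))ᶜ ∈ nhds (x, y) :=
      (isClosed_closure.isOpen_compl).mem_nhds hi
    rw [mem_nhds_prod_iff'] at hmem
    obtain ⟨U, V, hU, hxU, hV, hyV, hsub⟩ := hmem
    refine ⟨U, V, hU, hV, hxU, hyV, ?_⟩
    by_contra h
    obtain ⟨z, hzU, hzV⟩ := Set.nonempty_iff_ne_empty.mpr h
    have hz : (z, z) ∈ closure (U ×ˢ V) := by
      rw [closure_prod_eq]; exact ⟨hzU, hzV⟩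
    have hWz : (z, z) ∈ W i := (hW i).2 rfl
    obtain ⟨p, hp1, hp2⟩ := mem_closure_iff.mp hz (W i) (hW i).1 hWz
    exact hsub hp2 (subset_closure hp1)
  · intro h
    refine ⟨{p : X × X // p.1 ≠ p.2}, ?_⟩
    have hch : ∀ p : {p : X × X // p.1 ≠ p.2}, ∃ U V : Set X,
        IsOpen U ∧ IsOpen V ∧ p.1.1 ∈ U ∧ p.1.2 ∈ V ∧ closure U ∩ closure V = ∅ :=
      fun p => h p.1.1 p.1.2 p.2
    choose U V hU hV hx hy hdisj using hch
    refine ⟨fun p => (closure (U p) ×ˢ closure (V p))ᶜ, fun p => ⟨?_, ?_⟩, ?_⟩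
    · exact (isClosed_closure.prod isClosed_closure).isOpen_compl
    · rintro ⟨a, b⟩ hab ⟨h1, h2⟩
      obtain rfl : a = b := hab
      exact Set.eq_empty_iff_forall_notMem.mp (hdisj p) a ⟨h1, h2⟩
    · apply Set.Subset.antisymm
      · rintro ⟨a, b⟩ hab
        obtain rfl : a = b := hab
        refine Set.mem_iInter.mpr fun p => subset_closure ?_
        rintro ⟨h1, h2⟩
        exact Set.eq_empty_iff_forall_notMem.mp (hdisj p) a ⟨h1, h2⟩
      · rintro ⟨a, b⟩ hab
        by_contra hne
        have hne' : a ≠ b := fun e => hne (by simp [Set.mem_diagonal_iff, e])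
        set p : {p : X × X // p.1 ≠ p.2} := ⟨(a, b), hne'⟩
        have := Set.mem_iInter.mp hab p
        have hopen : (U p ×ˢ V p) ∈ nhds (a, b) :=
          ((hU p).prod (hV p)).mem_nhds ⟨hx p, hy p⟩
        obtain ⟨q, hq1, hq2⟩ := mem_closure_iff_nhds.mp this _ hopen
        exact hq2 ⟨subset_closure hq1.1, subset_closure hq1.2⟩
end

section
/- Let κ be an infinite cardinal. A space X has a regular G_κ-diagonal if and only if there is a family (𝒰_η : η < κ) of open covers of X such that for any distinct points x, y ∈ X, there exist η < κ and sets U, V ∈ 𝒰_η with x ∈ U, y ∈ V, and no member of 𝒰_η intersects both U and V. -/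
open Set Cardinal

universe u

theorem statement1 {X : Type u} [TopologicalSpace X] (κ : Cardinal.{u}) (hκ : ℵ₀ ≤ κ) :
    HasRegularGDiagonal X κ ↔
    ∃ (ι : Type u) (𝒰 : ι → Set (Set X)), #ι ≤ κ ∧ (∀ i, IsOpenCover (𝒰 i)) ∧
      ∀ x y : X, x ≠ y → ∃ i, ∃ U ∈ 𝒰 i, ∃ V ∈ 𝒰 i, x ∈ U ∧ y ∈ V ∧
        ∀ W ∈ 𝒰 i, ¬((W ∩ U).Nonempty ∧ (W ∩ V).Nonempty) := by
  constructor
  · rintro ⟨ι, W, hι, hopen, hdiag, hcl⟩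
    have hmemW : ∀ (i : ι) (x : X), (x, x) ∈ W i := by
      intro i x
      have hx : (x, x) ∈ Set.diagonal X := rfl
      rw [hdiag] at hx
      exact mem_iInter.1 hx i
    refine ⟨ι, fun i => {U | IsOpen U ∧ U ×ˢ U ⊆ W i}, hι, ?_, ?_⟩
    · intro i
      refine ⟨fun U hU => hU.1, ?_⟩
      ext x
      simp only [mem_sUnion, mem_univ, iff_true]
      obtain ⟨u, v, hu, hv, hxu, hxv, huv⟩ :=
        (isOpen_prod_iff.1 (hopen i)) x x (hmemW i x)
      exact ⟨u ∩ v, ⟨hu.inter hv, fun p hp => huv ⟨hp.1.1, hp.2.2⟩⟩, hxu, hxv⟩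
    · intro x y hxy
      have hnd : (x, y) ∉ Set.diagonal X := hxy
      rw [hcl] at hnd
      obtain ⟨i, hi⟩ : ∃ i, (x, y) ∉ closure (W i) := by
        by_contra h; push_neg at h; exact hnd (mem_iInter.2 h)
      obtain ⟨u, v, hu, hv, hxu, hyv, huv⟩ :=
        isOpen_prod_iff.1 (isClosed_closure.isOpen_compl) x y hi
      obtain ⟨u0, v0, hu0, hv0, hxu0, hxv0, h0⟩ :=
        isOpen_prod_iff.1 (hopen i) x x (hmemW i x)
      obtain ⟨u1, v1, hu1, hv1, hyu1, hyv1, h1⟩ :=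
        isOpen_prod_iff.1 (hopen i) y y (hmemW i y)
      refine ⟨i, (u0 ∩ v0) ∩ u,
        ⟨((hu0.inter hv0).inter hu), fun p hp => h0 ⟨hp.1.1.1, hp.2.1.2⟩⟩,
        (u1 ∩ v1) ∩ v,
        ⟨((hu1.inter hv1).inter hv), fun p hp => h1 ⟨hp.1.1.1, hp.2.1.2⟩⟩,
        ⟨⟨hxu0, hxv0⟩, hxu⟩, ⟨⟨hyu1, hyv1⟩, hyv⟩, ?_⟩
      rintro V ⟨hVopen, hVsub⟩ ⟨⟨a, haV, haU⟩, ⟨b, hbV, hbU⟩⟩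
      have hab : (a, b) ∈ W i := hVsub ⟨haV, hbV⟩
      have hab' : (a, b) ∈ (closure (W i))ᶜ := huv ⟨haU.2, hbU.2⟩
      exact hab' (subset_closure hab)
  · rintro ⟨ι, 𝒰, hι, hcov, hsep⟩
    set W : ι → Set (X × X) := fun i => ⋃ U ∈ 𝒰 i, U ×ˢ U with hW
    have hWopen : ∀ i, IsOpen (W i) :=
      fun i => isOpen_biUnion fun U hU => ((hcov i).1 U hU).prod ((hcov i).1 U hU)
    have hdsub : ∀ i, Set.diagonal X ⊆ W i := by
      rintro i ⟨x, y⟩ hxy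
      have hx : x ∈ ⋃₀ 𝒰 i := by rw [(hcov i).2]; trivial
      obtain ⟨U, hU, hxU⟩ := hx
      have : (x, y) ∈ U ×ˢ U := ⟨hxU, by rw [← hxy]; exact hxU⟩
      exact mem_biUnion hU this
    have key : ∀ p : X × X, (∀ i, p ∈ closure (W i)) → p ∈ Set.diagonal X := by
      intro p hp
      by_contra hne
      obtain ⟨i, U, hU, V, hV, hx, hy, hns⟩ := hsep p.1 p.2 hne
      have hpUV : p ∈ U ×ˢ V := ⟨hx, hy⟩
      obtain ⟨q, hq1, hq2⟩ := mem_closure_iff.1 (hp i) (U ×ˢ V)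
        (((hcov i).1 U hU).prod ((hcov i).1 V hV)) hpUV
      obtain ⟨G, hG, hqG⟩ := mem_iUnion₂.1 hq2
      exact hns G hG ⟨⟨q.1, hqG.1, hq1.1⟩, ⟨q.2, hqG.2, hq1.2⟩⟩
    have hclsub : Set.diagonal X = ⋂ i, closure (W i) := by
      apply Subset.antisymm
      · exact fun p hp => mem_iInter.2 fun i => subset_closure (hdsub i hp)
      · exact fun p hp => key p (mem_iInter.1 hp)
    refine ⟨ι, W, hι, hWopen, ?_, hclsub⟩
    apply Subset.antisymm
    · exact fun p hp => mem_iInter.2 fun i => hdsub i hp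
    · exact fun p hp => key p fun i => subset_closure (mem_iInter.1 hp i)
end

section
/- If a space X has a regular G_κ-diagonal for an infinite cardinal κ, then there is a family (𝒰_η : η < κ) of open covers of X such that for any distinct points x, y ∈ X, there exist η < κ and sets U, V ∈ 𝒰_η with x ∈ U, y ∈ V, and V ∩ closure(st(U, 𝒰_η)) = ∅. -/
open Set Cardinal

universe u

theorem statement2 {X : Type u} [TopologicalSpace X] (κ : Cardinal.{u}) (hκ : ℵ₀ ≤ κ)
    (hd : HasRegularGDiagonal X κ) :
    ∃ (ι : Type u) (𝒰 : ι → Set (Set X)), #ι ≤ κ ∧ (∀ i, IsOpenCover (𝒰 i)) ∧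
      ∀ x y : X, x ≠ y → ∃ i, ∃ U ∈ 𝒰 i, ∃ V ∈ 𝒰 i, x ∈ U ∧ y ∈ V ∧
        V ∩ closure (star U (𝒰 i)) = ∅ := by
  obtain ⟨ι, W, hι, hWopen, hdiag, hdiagcl⟩ := hd
  have hmemW : ∀ (i : ι) (x : X), (x, x) ∈ W i := by
    intro i x
    have : (x, x) ∈ Set.diagonal X := rfl
    rw [hdiag] at this
    exact mem_iInter.1 this i
  refine ⟨ι, fun i => {U | IsOpen U ∧ U ×ˢ U ⊆ W i}, hι, ?_, ?_⟩
  · intro i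
    refine ⟨fun U hU => hU.1, ?_⟩
    ext x
    simp only [mem_sUnion, mem_univ, iff_true]
    obtain ⟨u, v, hu, hv, hxu, hxv, huv⟩ :=
      isOpen_prod_iff.1 (hWopen i) x x (hmemW i x)
    exact ⟨u ∩ v, ⟨hu.inter hv, fun p hp => huv ⟨hp.1.1, hp.2.2⟩⟩, hxu, hxv⟩
  · intro x y hxy
    have hxy' : (x, y) ∉ Set.diagonal X := hxy
    rw [hdiagcl] at hxy'
    obtain ⟨i, hi⟩ : ∃ i, (x, y) ∉ closure (W i) := by
      simpa using hxy'
    obtain ⟨A, B, hA, hB, hxA, hyB, hAB⟩ :=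
      isOpen_prod_iff.1 (isOpen_compl_iff.2 isClosed_closure) x y hi
    obtain ⟨u, v, hu, hv, hxu, hxv, huv⟩ :=
      isOpen_prod_iff.1 (hWopen i) x x (hmemW i x)
    obtain ⟨u', v', hu', hv', hyu', hyv', huv'⟩ :=
      isOpen_prod_iff.1 (hWopen i) y y (hmemW i y)
    refine ⟨i, u ∩ v ∩ A, ⟨(hu.inter hv).inter hA,
      fun p hp => huv ⟨hp.1.1.1, hp.2.1.2⟩⟩, u' ∩ v' ∩ B, ⟨(hu'.inter hv').inter hB,
      fun p hp => huv' ⟨hp.1.1.1, hp.2.1.2⟩⟩, ⟨⟨hxu, hxv⟩, hxA⟩, ⟨⟨hyu', hyv'⟩, hyB⟩, ?_⟩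
    ext z
    simp only [mem_inter_iff, mem_empty_iff_false, iff_false]
    rintro ⟨hzV, hzcl⟩
    obtain ⟨p, hpV, hpstar⟩ :=
      mem_closure_iff.1 hzcl _ ((hu'.inter hv').inter hB) hzV
    obtain ⟨U', ⟨hU'mem, q, hqU', hqU⟩, hpU'⟩ := hpstar
    have h1 : (q, p) ∈ W i := hU'mem.2 ⟨hqU', hpU'⟩
    have h2 : (q, p) ∈ (closure (W i))ᶜ := hAB ⟨hqU.2, hpV.2⟩
    exact h2 (subset_closure h1)
end

section
/- Let X be a space with cellularity c(X) = κ, let U × V be a non-empty open box in X², and let 𝒰 be a collection of open boxes in X² with U × V ⊆ closure(⋃𝒰). Then there exists a subfamily 𝒱 = {U_η × V_η : η < κ} ⊆ 𝒰 such that V ⊆ closure(⋃_{η<κ} V_η) and each U_η × V_η meets U × V. -/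
open Set Cardinal

universe u

theorem statement5 {X : Type u} [TopologicalSpace X] (κ : Cardinal.{u}) (hκ : ℵ₀ ≤ κ)
    (hc : CellularityLE X κ) (U V : Set X) (hU : IsOpen U) (hV : IsOpen V)
    (hne : (U ×ˢ V).Nonempty) (𝒰 : Set (Set (X × X)))
    (hbox : ∀ S ∈ 𝒰, ∃ A B : Set X, IsOpen A ∧ IsOpen B ∧ S = A ×ˢ B)
    (hcov : U ×ˢ V ⊆ closure (⋃₀ 𝒰)) :
    ∃ (ι : Type u) (A B : ι → Set X), #ι ≤ κ ∧ (∀ i, A i ×ˢ B i ∈ 𝒰) ∧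
      V ⊆ closure (⋃ i, B i) ∧ ∀ i, ((A i ×ˢ B i) ∩ (U ×ˢ V)).Nonempty := by
  obtain ⟨⟨u0, v0⟩, hu0, hv0⟩ := hne
  simp only [Set.mem_prod] at *
  -- candidate open sets
  set C : Set (Set X) := {D | D.Nonempty ∧ IsOpen D ∧ ∃ A B : Set X,
    A ×ˢ B ∈ 𝒰 ∧ ((A ×ˢ B) ∩ (U ×ˢ V)).Nonempty ∧ D ⊆ B} with hCdef
  -- key density fact
  have key : ∀ O : Set X, IsOpen O → (O ∩ V).Nonempty → ∃ D ∈ C, D ⊆ O := by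
    intro O hO ⟨v, hvO, hvV⟩
    have hmem : (u0, v) ∈ closure (⋃₀ 𝒰) := hcov ⟨hu0, hvV⟩
    have hGopen : IsOpen (U ×ˢ (O ∩ V)) := hU.prod (hO.inter hV)
    have hGmem : (u0, v) ∈ U ×ˢ (O ∩ V) := ⟨hu0, hvO, hvV⟩
    obtain ⟨p, hp1, hp2⟩ := (mem_closure_iff.mp hmem) _ hGopen hGmem
    obtain ⟨W, hW𝒰, hpW⟩ := hp2
    obtain ⟨A, B, hA, hB, rfl⟩ := hbox W hW𝒰
    refine ⟨B ∩ O ∩ V, ⟨⟨p.2, ⟨hpW.2, hp1.2.1⟩, hp1.2.2⟩,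
      ((hB.inter hO).inter hV), A, B, hW𝒰, ⟨p, hpW, hp1.1, hp1.2.2⟩,
      fun x hx => hx.1.1⟩, fun x hx => hx.1.2⟩
  -- maximal pairwise disjoint subfamily of C
  obtain ⟨𝒟, h𝒟⟩ := zorn_subset {𝒟 | 𝒟 ⊆ C ∧ 𝒟.PairwiseDisjoint id} (by
    intro c hc hchain
    refine ⟨⋃₀ c, ⟨fun D hD => ?_, ?_⟩, fun s hs => subset_sUnion_of_mem hs⟩
    · obtain ⟨t, htc, hDt⟩ := hD
      exact (hc htc).1 hDt
    · intro s hs t ht hst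
      obtain ⟨s', hs'c, hss'⟩ := hs
      obtain ⟨t', ht'c, htt'⟩ := ht
      rcases hchain.total hs'c ht'c with h | h
      · exact (hc ht'c).2 (h hss') htt' hst
      · exact (hc hs'c).2 hss' (h htt') hst)
  have h𝒟C : 𝒟 ⊆ C := h𝒟.1.1
  have h𝒟pd : 𝒟.PairwiseDisjoint id := h𝒟.1.2
  -- choose boxes for each member of 𝒟
  have hex : ∀ D : 𝒟, ∃ A B : Set X,
      A ×ˢ B ∈ 𝒰 ∧ ((A ×ˢ B) ∩ (U ×ˢ V)).Nonempty ∧ (D : Set X) ⊆ B :=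
    fun D => (h𝒟C D.2).2.2
  choose A B hmem𝒰 hmeet hsub using hex
  refine ⟨↥𝒟, A, B, ?_, hmem𝒰, ?_, hmeet⟩
  · exact hc 𝒟 (fun D hD => ⟨(h𝒟C hD).2.1, (h𝒟C hD).1⟩) h𝒟pd
  · intro v hvV
    rw [mem_closure_iff]
    intro O hO hvO
    obtain ⟨D', hD'C, hD'O⟩ := key O hO ⟨v, hvO, hvV⟩
    -- D' meets some element of 𝒟
    have : ∃ D ∈ 𝒟, (D' ∩ D).Nonempty := by
      by_contra h
      push_neg at h
      have hins : insert D' 𝒟 ∈ {𝒟 | 𝒟 ⊆ C ∧ 𝒟.PairwiseDisjoint id} := by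
        refine ⟨insert_subset hD'C h𝒟C, h𝒟pd.insert fun D hD _ => ?_⟩
        exact disjoint_iff_inter_eq_empty.mpr (h D hD)
      have := h𝒟.2 hins (subset_insert _ _)
      have hD'𝒟 : D' ∈ 𝒟 := this (mem_insert _ _)
      have : D' = ∅ := by rw [← Set.inter_self D']; exact h D' hD'𝒟
      exact hD'C.1.ne_empty this
    obtain ⟨D, hD𝒟, x, hxD', hxD⟩ := this
    exact ⟨x, hD'O hxD', Set.mem_iUnion.mpr ⟨⟨D, hD𝒟⟩, hsub ⟨D, hD𝒟⟩ hxD⟩⟩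
end

section
/- If X is a Urysohn space, then |X| ≤ 2^(Δ̄(X) · 2^(wL(X))), where Δ̄(X) is the regular diagonal degree and wL(X) is the weak Lindelöf number. Equivalently: if X is Urysohn, has a regular G_κ-diagonal, and wL(X) ≤ τ, then |X| ≤ 2^(κ · 2^τ). -/
open Set Cardinal

universe u

theorem statement7 {X : Type u} [TopologicalSpace X] [T1Space X] (hX : IsUrysohn X)
    (κ τ : Cardinal.{u}) (hκ : ℵ₀ ≤ κ) (hτ : ℵ₀ ≤ τ)
    (hd : HasRegularGDiagonal X κ) (hw : WeakLindelofLE X τ) :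
    #X ≤ 2 ^ (κ * 2 ^ τ) := by
  obtain ⟨ι, W, hι, hWopen, hdiag1, hdiag2⟩ := hd
  -- for each i, the family of open squares inside `W i` covers `X`
  have hcov : ∀ i : ι, IsOpenCover {V : Set X | IsOpen V ∧ V ×ˢ V ⊆ W i} := by
    intro i
    constructor
    · intro U hU; exact hU.1
    · apply Set.eq_univ_of_forall
      intro x
      have hxx : (x, x) ∈ W i := by
        have : (x, x) ∈ Set.diagonal X := rfl
        rw [hdiag1] at this
        exact Set.mem_iInter.mp this i
      obtain ⟨U, U', hU, hU', hxU, hxU', hsub⟩ := isOpen_prod_iff.mp (hWopen i) x x hxx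
      refine ⟨U ∩ U', ⟨hU.inter hU', ?_⟩, hxU, hxU'⟩
      intro p hp
      exact hsub ⟨hp.1.1, hp.2.2⟩
  have h𝒱 : ∀ i : ι, ∃ 𝒱 ⊆ {V : Set X | IsOpen V ∧ V ×ˢ V ⊆ W i},
      #𝒱 ≤ τ ∧ Dense (⋃₀ 𝒱) := fun i => hw _ (hcov i)
  choose 𝒱 h𝒱sub h𝒱card h𝒱dense using h𝒱
  -- the coding map
  set g : X → ∀ i : ι, Set (Set (𝒱 i)) :=
    fun x i => {𝒮 : Set (𝒱 i) | x ∈ closure (⋃ V ∈ 𝒮, (V : Set X))} with hg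
  have hginj : Function.Injective g := by
    intro x y hxy
    by_contra hne
    have hxyd : (x, y) ∉ Set.diagonal X := hne
    rw [hdiag2] at hxyd
    obtain ⟨i, hi⟩ : ∃ i, (x, y) ∉ closure (W i) := by
      by_contra h
      push_neg at h
      exact hxyd (Set.mem_iInter.mpr h)
    obtain ⟨O, O', hO, hO', hxO, hyO', hsub⟩ :=
      isOpen_prod_iff.mp (isOpen_compl_iff.mpr isClosed_closure) x y hi
    set 𝒮 : Set (𝒱 i) := {V : 𝒱 i | ((V : Set X) ∩ O).Nonempty} with h𝒮
    -- x is in the closure of the union over 𝒮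
    have hxmem : x ∈ closure (⋃ V ∈ 𝒮, (V : Set X)) := by
      rw [mem_closure_iff]
      intro N hN hxN
      obtain ⟨z, hz1, hz2⟩ := (h𝒱dense i).inter_open_nonempty (N ∩ O) (hN.inter hO)
        ⟨x, hxN, hxO⟩
      obtain ⟨V0, hV0, hzV0⟩ := hz2
      refine ⟨z, hz1.1, ?_⟩
      exact Set.mem_biUnion (show (⟨V0, hV0⟩ : 𝒱 i) ∈ 𝒮 from ⟨z, hzV0, hz1.2⟩) hzV0
    -- y is not in the closure of the union over 𝒮
    have hymem : y ∉ closure (⋃ V ∈ 𝒮, (V : Set X)) := by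
      intro hy
      rw [mem_closure_iff] at hy
      obtain ⟨z, hzO', hz⟩ := hy O' hO' hyO'
      obtain ⟨V, hV𝒮, hzV⟩ := Set.mem_iUnion₂.mp hz
      obtain ⟨w, hwV, hwO⟩ := hV𝒮
      have hVsq : (V : Set X) ×ˢ (V : Set X) ⊆ W i := (h𝒱sub i V.2).2
      have : (w, z) ∈ W i := hVsq ⟨hwV, hzV⟩
      exact hsub ⟨hwO, hzO'⟩ (subset_closure this)
    have : g x i = g y i := congrFun hxy i
    have hx𝒮 : 𝒮 ∈ g x i := hxmem
    rw [this] at hx𝒮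
    exact hymem hx𝒮
  -- cardinal arithmetic
  have h1 : #X ≤ #(∀ i : ι, Set (Set (𝒱 i))) := Cardinal.mk_le_of_injective hginj
  have h2 : #(∀ i : ι, Set (Set (𝒱 i))) = Cardinal.prod fun i => #(Set (Set (𝒱 i))) :=
    Cardinal.mk_pi _
  have h3 : (Cardinal.prod fun i => #(Set (Set (𝒱 i)))) ≤
      Cardinal.prod fun _ : ι => (2 : Cardinal.{u}) ^ ((2 : Cardinal.{u}) ^ τ) := by
    apply Cardinal.prod_le_prod
    intro i
    rw [Cardinal.mk_set, Cardinal.mk_set]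
    exact Cardinal.power_le_power_left two_ne_zero
      (Cardinal.power_le_power_left two_ne_zero (h𝒱card i))
  have h4 : (Cardinal.prod fun _ : ι => (2 : Cardinal.{u}) ^ ((2 : Cardinal.{u}) ^ τ)) =
      ((2 : Cardinal.{u}) ^ ((2 : Cardinal.{u}) ^ τ)) ^ #ι := Cardinal.prod_const' _ _
  have h5 : ((2 : Cardinal.{u}) ^ ((2 : Cardinal.{u}) ^ τ)) ^ #ι ≤
      ((2 : Cardinal.{u}) ^ ((2 : Cardinal.{u}) ^ τ)) ^ κ :=
    Cardinal.power_le_power_left (Cardinal.power_ne_zero _ two_ne_zero) hι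
  calc #X ≤ _ := h1
    _ = _ := h2
    _ ≤ _ := h3
    _ = _ := h4
    _ ≤ _ := h5
    _ = 2 ^ (2 ^ τ * κ) := Cardinal.power_mul.symm
    _ = 2 ^ (κ * 2 ^ τ) := by rw [mul_comm]
end

section
/- If X is a Urysohn space with a regular G_δ-diagonal, then |X| ≤ 2^(2^(wL(X))), where wL(X) is the weak Lindelöf number. -/
open Set Cardinal

universe u

theorem statement8 {X : Type u} [TopologicalSpace X] [T1Space X] (hX : IsUrysohn X)
    (τ : Cardinal.{u}) (hτ : ℵ₀ ≤ τ)
    (hd : HasRegularGDiagonal X ℵ₀) (hw : WeakLindelofLE X τ) :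
    #X ≤ (2 : Cardinal.{u}) ^ ((2 : Cardinal.{u}) ^ τ) := by
  obtain ⟨ι, W, hι, hWopen, hΔ1, hΔ2⟩ := hd
  have hcover : ∀ i, IsOpenCover {U : Set X | IsOpen U ∧ U ×ˢ U ⊆ W i} := by
    intro i
    refine ⟨fun U hU => hU.1, ?_⟩
    ext x
    simp only [Set.mem_univ, iff_true, Set.mem_sUnion]
    have hx : (x, x) ∈ W i := by
      have hxx : (x, x) ∈ Set.diagonal X := rfl
      rw [hΔ1] at hxx
      exact Set.mem_iInter.1 hxx i
    obtain ⟨U, V, hU, hV, hxU, hxV, hUV⟩ := isOpen_prod_iff.1 (hWopen i) x x hx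
    exact ⟨U ∩ V, ⟨hU.inter hV, fun p hp => hUV (Set.mem_prod.2 ⟨hp.1.1, hp.2.2⟩)⟩,
      hxU, hxV⟩
  choose 𝒱 h𝒱sub h𝒱card h𝒱dense using fun i => hw _ (hcover i)
  let φ : X → ∀ i, Set (Set ↥(𝒱 i)) :=
    fun x i => {S | x ∈ closure (⋃ v ∈ S, (v : Set X))}
  have hinj : Function.Injective φ := by
    intro x y hxy
    by_contra hne
    have hxyd : (x, y) ∉ Set.diagonal X := fun h => hne h
    rw [hΔ2] at hxyd
    obtain ⟨i, hi⟩ : ∃ i, (x, y) ∉ closure (W i) := by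
      by_contra h
      push_neg at h
      exact hxyd (Set.mem_iInter.2 h)
    obtain ⟨A, B, hA, hB, hxA, hyB, hAB⟩ :=
      isOpen_prod_iff.1 (isOpen_compl_iff.2 isClosed_closure) x y hi
    set S : Set ↥(𝒱 i) := {v | ((v : Set X) ∩ A).Nonempty} with hS
    have hxS : S ∈ φ x i := by
      show x ∈ closure (⋃ v ∈ S, (v : Set X))
      rw [mem_closure_iff]
      intro O hO hxO
      have hOA : (O ∩ A).Nonempty := ⟨x, hxO, hxA⟩
      obtain ⟨z, ⟨hzO, hzA⟩, hzD⟩ :=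
        (h𝒱dense i).inter_open_nonempty (O ∩ A) (hO.inter hA) hOA
      obtain ⟨v, hv𝒱, hzv⟩ := hzD
      refine ⟨z, hzO, ?_⟩
      exact Set.mem_biUnion (show (⟨v, hv𝒱⟩ : ↥(𝒱 i)) ∈ S from ⟨z, hzv, hzA⟩) hzv
    have hyS : S ∉ φ y i := by
      show y ∉ closure (⋃ v ∈ S, (v : Set X))
      intro hy
      rw [mem_closure_iff] at hy
      obtain ⟨z, hzB, hzU⟩ := hy B hB hyB
      obtain ⟨v, hvS, hzv⟩ := Set.mem_iUnion₂.1 hzU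
      obtain ⟨a, hav, haA⟩ := hvS
      have hvprop := h𝒱sub i v.2
      have : (a, z) ∈ W i := hvprop.2 (Set.mem_prod.2 ⟨hav, hzv⟩)
      exact hAB (Set.mem_prod.2 ⟨haA, hzB⟩) (subset_closure this)
    exact hyS (hxy ▸ hxS)
  have h1 : #X ≤ #(∀ i, Set (Set ↥(𝒱 i))) := Cardinal.mk_le_of_injective hinj
  have h2 : #(∀ i, Set (Set ↥(𝒱 i))) = Cardinal.prod fun i => #(Set (Set ↥(𝒱 i))) :=
    Cardinal.mk_pi _
  have h2τ : ℵ₀ ≤ (2 : Cardinal.{u}) ^ τ := hτ.trans (Cardinal.cantor τ).le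
  have h3 : ∀ i, #(Set (Set ↥(𝒱 i))) ≤ (2 : Cardinal.{u}) ^ ((2 : Cardinal.{u}) ^ τ) := by
    intro i
    rw [Cardinal.mk_set, Cardinal.mk_set]
    exact Cardinal.power_le_power_left two_ne_zero
      (Cardinal.power_le_power_left two_ne_zero (h𝒱card i))
  calc #X ≤ Cardinal.prod fun i => #(Set (Set ↥(𝒱 i))) := h2 ▸ h1
    _ ≤ Cardinal.prod fun _ : ι => (2 : Cardinal.{u}) ^ ((2 : Cardinal.{u}) ^ τ) :=
        Cardinal.prod_le_prod _ _ h3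
    _ = ((2 : Cardinal.{u}) ^ ((2 : Cardinal.{u}) ^ τ)) ^ #ι := Cardinal.prod_const' _ _
    _ ≤ ((2 : Cardinal.{u}) ^ ((2 : Cardinal.{u}) ^ τ)) ^ (ℵ₀ : Cardinal.{u}) :=
        Cardinal.power_le_power_left (Cardinal.power_ne_zero _ two_ne_zero) hι
    _ = (2 : Cardinal.{u}) ^ ((2 : Cardinal.{u}) ^ τ * ℵ₀) := by rw [← Cardinal.power_mul]
    _ = (2 : Cardinal.{u}) ^ ((2 : Cardinal.{u}) ^ τ) := by
        rw [Cardinal.mul_eq_left h2τ h2τ Cardinal.aleph0_ne_zero]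
end

section
/- Every weakly Lindelöf Urysohn space with a regular G_δ-diagonal has cardinality at most 2^(2^ω). -/
open Set Cardinal

universe u

theorem statement9 {X : Type u} [TopologicalSpace X] [T1Space X] (hX : IsUrysohn X)
    (hd : HasRegularGDiagonal X ℵ₀) (hw : WeakLindelofLE X ℵ₀) :
    #X ≤ (2 : Cardinal.{u}) ^ ((2 : Cardinal.{u}) ^ (ℵ₀ : Cardinal.{u})) := by
  classical
  obtain ⟨ι, W, hι, hWopen, hdiag, hdiagcl⟩ := hd
  -- For each i, get a countable family of open squares inside W i with dense union
  have hcov : ∀ i : ι, ∃ e : ULift.{u} ℕ → Set X,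
      (∀ k, IsOpen (e k) ∧ (e k) ×ˢ (e k) ⊆ W i) ∧ Dense (⋃ k, e k) := by
    intro i
    set 𝒞 : Set (Set X) := {U | IsOpen U ∧ U ×ˢ U ⊆ W i} with h𝒞
    have hcover : IsOpenCover 𝒞 := by
      constructor
      · intro U hU; exact hU.1
      · ext x
        simp only [Set.mem_sUnion, Set.mem_univ, iff_true]
        have hxW : (x, x) ∈ W i := by
          have : (x, x) ∈ Set.diagonal X := rfl
          rw [hdiag] at this
          exact Set.mem_iInter.mp this i
        obtain ⟨u, v, hu, hv, hxu, hxv, huv⟩ :=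
          (isOpen_prod_iff.mp (hWopen i)) x x hxW
        refine ⟨u ∩ v, ⟨hu.inter hv, ?_⟩, hxu, hxv⟩
        intro p hp
        exact huv ⟨hp.1.1, hp.2.2⟩
    obtain ⟨𝒱, h𝒱sub, h𝒱card, h𝒱dense⟩ := hw 𝒞 hcover
    have hcnt : (𝒱 ∪ {(∅ : Set X)}).Countable := by
      refine Set.Countable.union ?_ (Set.countable_singleton _)
      exact Cardinal.mk_le_aleph0_iff.mp h𝒱card
    obtain ⟨f, hf⟩ := Set.Countable.exists_eq_range hcnt
      ⟨∅, Or.inr rfl⟩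
    refine ⟨fun k => f k.down, ?_, ?_⟩
    · intro k
      have : f k.down ∈ 𝒱 ∪ {(∅ : Set X)} := by rw [hf]; exact ⟨k.down, rfl⟩
      rcases this with h | h
      · exact ⟨(h𝒱sub h).1, (h𝒱sub h).2⟩
      · simp only [Set.mem_singleton_iff] at h
        simp only [h]
        exact ⟨isOpen_empty, by simp⟩
    · have : (⋃ k : ULift.{u} ℕ, f k.down) = ⋃₀ (𝒱 ∪ {(∅ : Set X)}) := by
        rw [hf]
        ext z
        simp only [Set.mem_iUnion, Set.mem_sUnion, Set.mem_range]
        constructor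
        · rintro ⟨k, hk⟩; exact ⟨f k.down, ⟨k.down, rfl⟩, hk⟩
        · rintro ⟨t, ⟨n, rfl⟩, hz⟩; exact ⟨⟨n⟩, hz⟩
      rw [this, Set.sUnion_union]
      simpa using h𝒱dense
  choose e he hedense using hcov
  -- the injection
  set F : X → ι → Set (Set (ULift.{u} ℕ)) :=
    fun x i => {s | x ∈ closure (⋃ k ∈ s, e i k)} with hF
  have hFinj : Function.Injective F := by
    intro x y hxy
    by_contra hne
    have hmem : (x, y) ∉ Set.diagonal X := hne
    rw [hdiagcl] at hmem
    simp only [Set.mem_iInter, not_forall] at hmem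
    obtain ⟨i, hi⟩ := hmem
    obtain ⟨A, B, hA, hB, hxA, hyB, hAB⟩ :=
      (isOpen_prod_iff.mp (isOpen_compl_iff.mpr isClosed_closure)) x y hi
    have hABW : ∀ a ∈ A, ∀ b ∈ B, (a, b) ∉ W i := by
      intro a ha b hb hab
      exact hAB (Set.mk_mem_prod ha hb) (subset_closure hab)
    set S : Set (ULift.{u} ℕ) := {k | (e i k ∩ A).Nonempty} with hS
    have hxS : x ∈ closure (⋃ k ∈ S, e i k) := by
      have hsub : A ∩ ⋃ k, e i k ⊆ ⋃ k ∈ S, e i k := by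
        rintro z ⟨hzA, hz⟩
        obtain ⟨k, hk⟩ := Set.mem_iUnion.mp hz
        exact Set.mem_biUnion ⟨z, hk, hzA⟩ hk
      have hxcl : x ∈ closure (A ∩ ⋃ k, e i k) := by
        rw [mem_closure_iff]
        intro O hO hxO
        have : ((O ∩ A) ∩ ⋃ k, e i k).Nonempty :=
          (hedense i).inter_open_nonempty _ (hO.inter hA) ⟨x, hxO, hxA⟩
        obtain ⟨z, ⟨hzO, hzA⟩, hz⟩ := this
        exact ⟨z, hzO, hzA, hz⟩
      exact closure_mono hsub hxcl
    have hyS : y ∈ closure (⋃ k ∈ S, e i k) := by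
      have : S ∈ F x i := hxS
      rw [hxy] at this
      exact this
    have hBdisj : B ∩ ⋃ k ∈ S, e i k = ∅ := by
      ext z
      simp only [Set.mem_inter_iff, Set.mem_iUnion, Set.mem_empty_iff_false,
        iff_false, not_and, not_exists]
      intro hzB k hkS hzk
      obtain ⟨a, hae, haA⟩ := hkS
      exact hABW a haA z hzB ((he i k).2 (Set.mk_mem_prod hae hzk))
    rw [mem_closure_iff] at hyS
    obtain ⟨z, hz1, hz2⟩ := hyS B hB hyB
    exact absurd (Set.mem_inter hz1 hz2) (by rw [hBdisj]; exact not_false)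
  -- cardinal arithmetic
  have h1 : #X ≤ #(ι → Set (Set (ULift.{u} ℕ))) := Cardinal.mk_le_of_injective hFinj
  have h2 : #(ι → Set (Set (ULift.{u} ℕ)))
      = #(Set (Set (ULift.{u} ℕ))) ^ #ι := (Cardinal.power_def _ _).symm
  have h3 : #(Set (Set (ULift.{u} ℕ))) = (2 : Cardinal.{u}) ^ ((2 : Cardinal.{u}) ^ ℵ₀) := by
    rw [Cardinal.mk_set, Cardinal.mk_set, Cardinal.mk_uLift, Cardinal.mk_nat,
      Cardinal.lift_aleph0]
  have h4 : ((2 : Cardinal.{u}) ^ ((2 : Cardinal.{u}) ^ ℵ₀)) ^ #ι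
      ≤ ((2 : Cardinal.{u}) ^ ((2 : Cardinal.{u}) ^ ℵ₀)) ^ (ℵ₀ : Cardinal.{u}) := by
    apply Cardinal.power_le_power_left _ hι
    exact Cardinal.power_ne_zero _ two_ne_zero
  have h5 : ((2 : Cardinal.{u}) ^ ((2 : Cardinal.{u}) ^ ℵ₀)) ^ (ℵ₀ : Cardinal.{u})
      = (2 : Cardinal.{u}) ^ ((2 : Cardinal.{u}) ^ ℵ₀) := by
    rw [← Cardinal.power_mul]
    congr 1
    exact Cardinal.mul_eq_left (le_of_lt (Cardinal.cantor ℵ₀)) (le_of_lt (Cardinal.cantor ℵ₀))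
      Cardinal.aleph0_ne_zero
  calc #X ≤ #(ι → Set (Set (ULift.{u} ℕ))) := h1
    _ = ((2 : Cardinal.{u}) ^ ((2 : Cardinal.{u}) ^ ℵ₀)) ^ #ι := by rw [h2, h3]
    _ ≤ _ := h4.trans (le_of_eq h5)
end

section
/- If X is a Urysohn space, then |X| ≤ wL(X)^(χ(X) · Δ̄(X)). Equivalently: if X is Urysohn with a regular G_κ-diagonal, wL(X) ≤ λ, and χ(X) ≤ μ, then |X| ≤ λ^(κ·μ). -/
open Set Cardinal

universe u

/-!
Fix a regular `G_κ`-diagonal `Δ = ⋂ W_η = ⋂ cl W_η`. For each `η`, the open sets `V` with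
`V × V ⊆ W_η` cover `X`, so weak Lindelöfness gives a subfamily `𝒱_η` of size `≤ λ` with dense
union. Code a point `y` by choosing, for every `η` and every pair `s, t` of members of a local base
at `y` (indexed by `μ`), some `V ∈ 𝒱_η` meeting `B_s(y) ∩ B_t(y)`. If `x` and `z` have the same
code, then for all basic neighbourhoods `B_s(x)`, `B_t(z)` one common `V` meets both, so
`B_s(x) × B_t(z)` meets `V × V ⊆ W_η`; hence `(x, z) ∈ ⋂ cl W_η = Δ`. The code is thus injective
into a product of `κ · μ · μ = κ · μ` sets of size `≤ λ`.
-/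

open Function

theorem exists_surjective_of_mk_le {α β : Type u} [Nonempty α] (h : #α ≤ #β) :
    ∃ f : β → α, Surjective f :=
  let ⟨e⟩ := h
  ⟨invFun e, invFun_surjective e.injective⟩

section

variable {X : Type u} [TopologicalSpace X]

theorem isOpenCover_setOf_prod_subset {W : Set (X × X)} (hW : IsOpen W)
    (hΔ : diagonal X ⊆ W) : IsOpenCover {V : Set X | IsOpen V ∧ V ×ˢ V ⊆ W} := by
  refine ⟨fun V hV => hV.1, eq_univ_of_forall fun x => ?_⟩
  obtain ⟨u, v, hu, hv, hxu, hxv, huv⟩ := isOpen_prod_iff.mp hW x x (hΔ rfl)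
  exact ⟨u ∩ v, ⟨hu.inter hv, fun p hp => huv ⟨hp.1.1, hp.2.2⟩⟩, hxu, hxv⟩

theorem CharacterLE.exists_basis_indexed_out {μ : Cardinal.{u}} (h : CharacterLE X μ)
    (x : X) : ∃ b : μ.out → Set X, (∀ t, IsOpen (b t) ∧ x ∈ b t) ∧
      ∀ V : Set X, IsOpen V → x ∈ V → ∃ t, b t ⊆ V := by
  obtain ⟨B, hBμ, hB, hBbase⟩ := h x
  obtain ⟨U₀, hU₀, -⟩ := hBbase univ isOpen_univ (mem_univ x)
  have : Nonempty B := ⟨⟨U₀, hU₀⟩⟩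
  obtain ⟨g, hg⟩ := exists_surjective_of_mk_le (α := B) (β := μ.out) (by rwa [mk_out])
  refine ⟨fun t => g t, fun t => hB _ (g t).2, fun V hV hxV => ?_⟩
  obtain ⟨U, hU, hUV⟩ := hBbase V hV hxV
  obtain ⟨t, ht⟩ := hg ⟨U, hU⟩
  exact ⟨t, by simpa only [ht] using hUV⟩

theorem mem_closure_of_forall_basis_prod_inter_nonempty {T : Type*} {b : X → T → Set X}
    (hb : ∀ x V, IsOpen V → x ∈ V → ∃ t, b x t ⊆ V) {W : Set (X × X)} {x z : X}
    (h : ∀ s t, (b x s ×ˢ b z t ∩ W).Nonempty) : (x, z) ∈ closure W := by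
  refine mem_closure_iff.mpr fun o ho hxz => ?_
  obtain ⟨u, v, hu, hv, hxu, hzv, huv⟩ := isOpen_prod_iff.mp ho x z hxz
  obtain ⟨s, hs⟩ := hb x u hu hxu
  obtain ⟨t, ht⟩ := hb z v hv hzv
  obtain ⟨p, hp, hpW⟩ := h s t
  exact ⟨p, huv ⟨hs hp.1, ht hp.2⟩, hpW⟩

theorem mk_le_mk_pi_of_iInter_closure_subset_diagonal {ι T : Type u} {W : ι → Set (X × X)}
    (hΔ : ⋂ η, closure (W η) ⊆ diagonal X) {𝒱 : ι → Set (Set X)}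
    (h𝒱W : ∀ η, ∀ V ∈ 𝒱 η, V ×ˢ V ⊆ W η) (h𝒱 : ∀ η, Dense (⋃₀ 𝒱 η))
    {b : X → T → Set X} (hb : ∀ x t, IsOpen (b x t) ∧ x ∈ b x t)
    (hbase : ∀ x V, IsOpen V → x ∈ V → ∃ t, b x t ⊆ V) :
    #X ≤ #(Π p : ι × T × T, 𝒱 p.1) := by
  have hcode : ∀ (y : X) (p : ι × T × T),
      ∃ V : 𝒱 p.1, ((V : Set X) ∩ (b y p.2.1 ∩ b y p.2.2)).Nonempty := by
    rintro y ⟨η, s, t⟩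
    obtain ⟨w, hw, V, hV, hwV⟩ := (h𝒱 η).inter_open_nonempty _
      ((hb y s).1.inter (hb y t).1) ⟨y, (hb y s).2, (hb y t).2⟩
    exact ⟨⟨V, hV⟩, w, hwV, hw⟩
  choose f hf using hcode
  refine mk_le_of_injective (f := f) fun x z hxz => ?_
  suffices hxz' : (x, z) ∈ ⋂ η, closure (W η) from hΔ hxz'
  refine mem_iInter.mpr fun η => ?_
  refine mem_closure_of_forall_basis_prod_inter_nonempty hbase fun s t => ?_
  obtain ⟨a, haV, has, -⟩ := hf x (η, s, t)
  obtain ⟨w, hwV, -, hwt⟩ := hxz ▸ hf z (η, s, t)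
  exact ⟨(a, w), ⟨has, hwt⟩, h𝒱W η _ (f x (η, s, t)).2 ⟨haV, hwV⟩⟩

end

theorem mk_prod_out_le {ι : Type u} {κ μ : Cardinal.{u}} (hι : #ι ≤ κ) (hμ : ℵ₀ ≤ μ) :
    #(ι × μ.out × μ.out) ≤ κ * μ := by
  simp only [mk_prod, lift_id, mk_out, mul_eq_self hμ]
  gcongr

theorem statement10_general {X : Type u} [TopologicalSpace X]
    (κ lam μ : Cardinal.{u}) (hlam : ℵ₀ ≤ lam) (hμ : ℵ₀ ≤ μ)
    (hd : HasRegularGDiagonal X κ) (hw : WeakLindelofLE X lam) (hch : CharacterLE X μ) :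
    #X ≤ lam ^ (κ * μ) := by
  obtain ⟨ι, W, hικ, hWo, hΔW, hΔcl⟩ := hd
  choose 𝒱 h𝒱sub h𝒱lam h𝒱dense using fun η =>
    hw _ (isOpenCover_setOf_prod_subset (hWo η) (hΔW ▸ iInter_subset _ η))
  choose b hb hbase using hch.exists_basis_indexed_out
  calc #X ≤ #(Π p : ι × μ.out × μ.out, 𝒱 p.1) :=
        mk_le_mk_pi_of_iInter_closure_subset_diagonal hΔcl.ge
          (fun η V hV => (h𝒱sub η hV).2) h𝒱dense hb hbase
    _ ≤ lam ^ #(ι × μ.out × μ.out) := by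
        rw [mk_pi, ← prod_const']
        exact prod_le_prod _ _ fun p => h𝒱lam p.1
    _ ≤ lam ^ (κ * μ) :=
        power_le_power_left (aleph0_pos.trans_le hlam).ne' (mk_prod_out_le hικ hμ)

theorem statement10 {X : Type u} [TopologicalSpace X] [T1Space X] (hX : IsUrysohn X)
    (κ lam μ : Cardinal.{u}) (hκ : ℵ₀ ≤ κ) (hlam : ℵ₀ ≤ lam) (hμ : ℵ₀ ≤ μ)
    (hd : HasRegularGDiagonal X κ) (hw : WeakLindelofLE X lam) (hch : CharacterLE X μ) :
    #X ≤ lam ^ (κ * μ) :=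
  statement10_general κ lam μ hlam hμ hd hw hch
end

section
/- If X is a first countable Urysohn space with a regular G_δ-diagonal, then |X| ≤ wL(X)^ω. -/
open Set Cardinal

universe u

theorem statement11 {X : Type u} [TopologicalSpace X] [T1Space X]
    [FirstCountableTopology X] (hX : IsUrysohn X) (τ : Cardinal.{u}) (hτ : ℵ₀ ≤ τ)
    (hd : HasRegularGDiagonal X ℵ₀) (hw : WeakLindelofLE X τ) :
    #X ≤ τ ^ (ℵ₀ : Cardinal.{u}) := by
  classical
  obtain ⟨ι, W₀, hι, hW₀open, hdiag, hdiagcl⟩ := hd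
  haveI hcι : Countable ι := Cardinal.mk_le_aleph0_iff.mp hι
  obtain ⟨f, hf⟩ := exists_injective_nat ι
  set W : ℕ → Set (X × X) := fun n =>
    if h : ∃ i, f i = n then W₀ h.choose else Set.univ with hWdef
  have hWidx : ∀ i, W (f i) = W₀ i := by
    intro i
    have h : ∃ j, f j = f i := ⟨i, rfl⟩
    have hc : h.choose = i := hf h.choose_spec
    simp only [hWdef, dif_pos h, hc]
  have hWopen : ∀ n, IsOpen (W n) := by
    intro n
    by_cases h : ∃ i, f i = n
    · simp only [hWdef, dif_pos h]; exact hW₀open _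
    · simp only [hWdef, dif_neg h]; exact isOpen_univ
  have hWmem : ∀ n (x : X), (x, x) ∈ W n := by
    intro n x
    by_cases h : ∃ i, f i = n
    · simp only [hWdef, dif_pos h]
      have hx : (x, x) ∈ ⋂ i, W₀ i := hdiag ▸ (Set.mem_diagonal x)
      exact Set.mem_iInter.mp hx _
    · simp only [hWdef, dif_neg h]; exact Set.mem_univ _
  have hWsep : ∀ x y : X, x ≠ y → ∃ n, (x, y) ∉ closure (W n) := by
    intro x y hxy
    have hne : (x, y) ∉ ⋂ i, closure (W₀ i) := by
      rw [← hdiagcl]; exact fun h => hxy h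
    rw [Set.mem_iInter] at hne
    push_neg at hne
    obtain ⟨i, hi⟩ := hne
    exact ⟨f i, by rwa [hWidx]⟩
  -- antitone open neighborhood bases
  have hbase : ∀ x : X, ∃ B : ℕ → Set X, (nhds x).HasAntitoneBasis B :=
    fun x => (nhds x).exists_antitone_basis
  choose B hB using hbase
  set Bo : X → ℕ → Set X := fun x k => interior (B x k) with hBo
  have hBoOpen : ∀ x k, IsOpen (Bo x k) := fun x k => isOpen_interior
  have hBoMem : ∀ x k, x ∈ Bo x k := fun x k =>
    mem_interior_iff_mem_nhds.mpr ((hB x).1.mem_of_mem trivial)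
  have hBoAnti : ∀ x, Antitone (Bo x) := fun x k l h => interior_mono ((hB x).2 h)
  have hBoBasis : ∀ x, ∀ S ∈ nhds x, ∃ k, Bo x k ⊆ S := by
    intro x S hS
    obtain ⟨k, -, hk⟩ := (hB x).1.mem_iff.mp hS
    exact ⟨k, interior_subset.trans hk⟩
  -- basic neighborhoods with small squares
  have hUex : ∀ (n : ℕ) (x : X), ∃ k, (Bo x k) ×ˢ (Bo x k) ⊆ W n := by
    intro n x
    have hmem : W n ∈ nhds (x, x) := (hWopen n).mem_nhds (hWmem n x)
    rw [nhds_prod_eq] at hmem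
    obtain ⟨u, hu, v, hv, huv⟩ := Filter.mem_prod_iff.mp hmem
    obtain ⟨k, hk⟩ := hBoBasis x (u ∩ v) (Filter.inter_mem hu hv)
    exact ⟨k, fun p hp => huv ⟨(hk hp.1).1, (hk hp.2).2⟩⟩
  choose kk hkk using hUex
  set U : ℕ → X → Set X := fun n x => Bo x (kk n x) with hUdef
  have hUopen : ∀ n x, IsOpen (U n x) := fun n x => hBoOpen _ _
  have hUmem : ∀ n x, x ∈ U n x := fun n x => hBoMem _ _
  have hUW : ∀ n x, (U n x) ×ˢ (U n x) ⊆ W n := fun n x => hkk n x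
  -- weak Lindelöf applied to each star cover
  have hA : ∀ n : ℕ, ∃ A : Set X, #A ≤ τ ∧ Dense (⋃ z ∈ A, U n z) := by
    intro n
    have hcov : IsOpenCover (Set.range (U n)) := by
      constructor
      · rintro _ ⟨z, rfl⟩; exact hUopen n z
      · ext x
        simp only [Set.mem_sUnion, Set.mem_univ, iff_true]
        exact ⟨U n x, ⟨x, rfl⟩, hUmem n x⟩
    obtain ⟨𝒱, h𝒱sub, h𝒱card, h𝒱dense⟩ := hw (Set.range (U n)) hcov
    have hch : ∀ V : 𝒱, ∃ z : X, U n z = (V : Set X) := fun V => h𝒱sub V.2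
    choose g hg using hch
    refine ⟨Set.range g, Cardinal.mk_range_le.trans h𝒱card, ?_⟩
    refine Dense.mono ?_ h𝒱dense
    intro y hy
    obtain ⟨V, hV, hyV⟩ := hy
    refine Set.mem_biUnion ⟨⟨V, hV⟩, rfl⟩ ?_
    rw [hg ⟨V, hV⟩]; exact hyV
  choose A hAcard hAdense using hA
  -- coding
  have hcode : ∀ (x : X) (n k : ℕ), ∃ z, z ∈ A n ∧ (Bo x k ∩ U n z).Nonempty := by
    intro x n k
    have hx : x ∈ closure (⋃ z ∈ A n, U n z) := hAdense n x
    obtain ⟨y, hy1, hy2⟩ := mem_closure_iff.mp hx (Bo x k) (hBoOpen x k) (hBoMem x k)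
    obtain ⟨z, hz, hyz⟩ := Set.mem_iUnion₂.mp hy2
    exact ⟨z, hz, ⟨y, hy1, hyz⟩⟩
  choose h hmem hne using hcode
  set S : Set X := ⋃ i : ULift.{u} ℕ, A i.down with hS
  have hmemS : ∀ x n k, h x n k ∈ S := fun x n k =>
    Set.mem_iUnion.mpr ⟨⟨n⟩, hmem x n k⟩
  set F : X → (ULift.{u} ℕ → ULift.{u} ℕ → S) :=
    fun x n k => ⟨h x n.down k.down, hmemS x n.down k.down⟩ with hF
  have hFinj : Function.Injective F := by
    intro x y hxy'
    by_contra hne'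
    obtain ⟨n, hn⟩ := hWsep x y hne'
    have hnb : ((closure (W n))ᶜ) ∈ nhds (x, y) :=
      (isOpen_compl_iff.mpr isClosed_closure).mem_nhds hn
    rw [nhds_prod_eq] at hnb
    obtain ⟨u, hu, v, hv, huv⟩ := Filter.mem_prod_iff.mp hnb
    obtain ⟨k₁, hk₁⟩ := hBoBasis x u hu
    obtain ⟨k₂, hk₂⟩ := hBoBasis y v hv
    set K := max k₁ k₂ with hK
    have hhxy : h x n K = h y n K := by
      have hcf := congrFun (congrFun hxy' ⟨n⟩) ⟨K⟩
      exact Subtype.ext_iff.mp hcf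
    obtain ⟨a, ha1, ha2⟩ := hne x n K
    obtain ⟨b, hb1, hb2⟩ := hne y n K
    rw [hhxy] at ha2
    have hab : (a, b) ∈ W n := hUW n (h y n K) ⟨ha2, hb2⟩
    have habc : (a, b) ∈ (closure (W n))ᶜ :=
      huv ⟨hk₁ (hBoAnti x (le_max_left k₁ k₂) ha1),
        hk₂ (hBoAnti y (le_max_right k₁ k₂) hb1)⟩
    exact habc (subset_closure hab)
  have hScard : #(↥S) ≤ τ := by
    have h1 : #(↥S) ≤ #(ULift.{u} ℕ) * ⨆ i : ULift.{u} ℕ, #(↥(A i.down)) :=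
      Cardinal.mk_iUnion_le _
    have h2 : (⨆ i : ULift.{u} ℕ, #(↥(A i.down))) ≤ τ :=
      ciSup_le' fun i => hAcard i.down
    have h3 : #(ULift.{u} ℕ) = (ℵ₀ : Cardinal.{u}) := Cardinal.mk_denumerable _
    calc #(↥S) ≤ #(ULift.{u} ℕ) * ⨆ i : ULift.{u} ℕ, #(↥(A i.down)) := h1
      _ ≤ (ℵ₀ : Cardinal.{u}) * τ := by rw [h3]; exact mul_le_mul_right h2 _
      _ = τ := by
          rw [Cardinal.mul_eq_max le_rfl hτ]
          exact max_eq_right hτ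
  calc #X ≤ #(ULift.{u} ℕ → ULift.{u} ℕ → ↥S) := Cardinal.mk_le_of_injective hFinj
    _ = (#(↥S) ^ (ℵ₀ : Cardinal.{u})) ^ (ℵ₀ : Cardinal.{u}) := by
        rw [← Cardinal.power_def (ULift.{u} ℕ → ↥S) (ULift.{u} ℕ),
          ← Cardinal.power_def (↥S) (ULift.{u} ℕ), Cardinal.mk_denumerable (ULift.{u} ℕ)]
    _ = #(↥S) ^ ((ℵ₀ : Cardinal.{u}) * (ℵ₀ : Cardinal.{u})) :=
        Cardinal.power_mul.symm
    _ = #(↥S) ^ (ℵ₀ : Cardinal.{u}) := by rw [Cardinal.aleph0_mul_aleph0]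
    _ ≤ τ ^ (ℵ₀ : Cardinal.{u}) := Cardinal.power_le_power_right hScard
end

section
/- Every weakly Lindelöf, first countable, Urysohn space with a regular G_δ-diagonal has cardinality at most 2^ω. -/
open Set Cardinal

universe u

theorem statement12 {X : Type u} [TopologicalSpace X] [T1Space X]
    [FirstCountableTopology X] (hX : IsUrysohn X)
    (hd : HasRegularGDiagonal X ℵ₀) (hw : WeakLindelofLE X ℵ₀) :
    #X ≤ 2 ^ (ℵ₀ : Cardinal.{u}) := by
  classical
  obtain ⟨ι, W0, hι, hW0open, hdiag0, hcl0⟩ := hd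
  set W1 : Option ι → Set (X × X) := fun o => o.elim Set.univ W0 with hW1def
  have hW1open : ∀ o, IsOpen (W1 o) := by rintro (_ | i); exacts [isOpen_univ, hW0open i]
  have hdiagW1 : ∀ o, Set.diagonal X ⊆ W1 o := by
    rintro (_ | i)
    · exact subset_univ _
    · rw [hdiag0]; exact iInter_subset _ i
  haveI : Countable ι := Cardinal.mk_le_aleph0_iff.mp hι
  obtain ⟨f, hf⟩ := exists_surjective_nat (Option ι)
  set w : ℕ → Set (X × X) := fun n => ⋂ k ∈ Finset.range (n + 1), W1 (f k) with hwdef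
  have hwopen : ∀ n, IsOpen (w n) := fun n => isOpen_biInter_finset fun k _ => hW1open (f k)
  have hwdiag : ∀ n, Set.diagonal X ⊆ w n := fun n =>
    subset_iInter₂ fun k _ => hdiagW1 (f k)
  have hwanti : ∀ {n m : ℕ}, n ≤ m → w m ⊆ w n := by
    intro n m hnm z hz
    refine mem_iInter₂.mpr fun k hk => mem_iInter₂.mp hz k ?_
    exact Finset.mem_range.mpr (lt_of_lt_of_le (Finset.mem_range.mp hk) (by omega))
  have hclsub : (⋂ n, closure (w n)) ⊆ Set.diagonal X := by
    intro z hz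
    rw [hcl0]
    refine mem_iInter.mpr fun i => ?_
    obtain ⟨k, hk⟩ := hf (some i)
    have h1 : w k ⊆ W1 (f k) :=
      iInter₂_subset k (Finset.mem_range.mpr (Nat.lt_succ_self k))
    have h2 : z ∈ closure (W1 (f k)) := closure_mono h1 (mem_iInter.mp hz k)
    rw [hk] at h2
    exact h2
  -- countable antitone neighborhood bases
  have hsbx : ∀ x : X, ∃ s : ℕ → Set X, (nhds x).HasAntitoneBasis s := fun x =>
    (nhds x).exists_antitone_basis
  choose sb hsb using hsbx
  -- the small neighborhoods V m x
  have hVex : ∀ (m : ℕ) (x : X), ∃ Vx : Set X,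
      IsOpen Vx ∧ x ∈ Vx ∧ Vx ×ˢ Vx ⊆ w m ∧ Vx ⊆ sb x m := by
    intro m x
    obtain ⟨u, v, hu, hv, hxu, hxv, huv⟩ :=
      isOpen_prod_iff.mp (hwopen m) x x (hwdiag m (Set.mem_diagonal x))
    have hs : sb x m ∈ nhds x := (hsb x).toHasBasis.mem_of_mem trivial
    refine ⟨u ∩ v ∩ interior (sb x m), ?_, ?_, ?_, ?_⟩
    · exact ((hu.inter hv).inter isOpen_interior)
    · exact ⟨⟨hxu, hxv⟩, mem_interior_iff_mem_nhds.mpr hs⟩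
    · rintro ⟨a, b⟩ ⟨ha, hb⟩
      exact huv ⟨ha.1.1, hb.1.2⟩
    · exact fun p hp => interior_subset hp.2
  choose V hVopen hVmem hVsq hVsub using hVex
  -- fineness of V at each point
  have hfine : ∀ (x : X) (A : Set X), A ∈ nhds x → ∀ n : ℕ, ∃ m, n ≤ m ∧ V m x ⊆ A := by
    intro x A hA n
    obtain ⟨m0, -, hm0⟩ := (hsb x).toHasBasis.mem_iff.mp hA
    refine ⟨max m0 n, le_max_right _ _, ?_⟩
    exact (hVsub _ x).trans (((hsb x).antitone (le_max_left m0 n)).trans hm0)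
  -- countable dense subfamilies from weak Lindelöf
  have hDex : ∀ m : ℕ, ∃ D : Set X, D.Countable ∧ Dense (⋃ d ∈ D, V m d) := by
    intro m
    have hcover : IsOpenCover (Set.range (V m)) := by
      constructor
      · rintro U ⟨z, rfl⟩; exact hVopen m z
      · exact eq_univ_of_forall fun x => ⟨V m x, mem_range_self x, hVmem m x⟩
    obtain ⟨𝒱, h𝒱sub, h𝒱card, h𝒱dense⟩ := hw (Set.range (V m)) hcover
    have hc : 𝒱.Countable := Set.countable_coe_iff.mp (Cardinal.mk_le_aleph0_iff.mp h𝒱card)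
    haveI := hc.to_subtype
    have hchoice : ∀ U : ↥𝒱, ∃ z : X, V m z = (U : Set X) := fun U => h𝒱sub U.2
    choose c hc2 using hchoice
    refine ⟨Set.range c, Set.countable_range c, h𝒱dense.mono ?_⟩
    rintro p ⟨U, hU, hpU⟩
    exact mem_iUnion₂.mpr ⟨c ⟨U, hU⟩, mem_range_self _, by rw [hc2 ⟨U, hU⟩]; exact hpU⟩
  choose Dm hDmc hDmd using hDex
  set D : Set X := ⋃ m, Dm m with hDdef
  have hDc : D.Countable := countable_iUnion hDmc
  haveI : Countable ↥D := hDc.to_subtype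
  -- the coding map
  set Φ : X → Set (ℕ × ↥D) := fun x => {p | (V p.1 ↑p.2 ∩ V p.1 x).Nonempty} with hΦdef
  have hinj : Function.Injective Φ := by
    intro x y hxy
    have hmem : (x, y) ∈ ⋂ n, closure (w n) := by
      refine mem_iInter.mpr fun n => ?_
      rw [mem_closure_iff]
      intro O hO hxyO
      obtain ⟨A, B, hA, hB, hxA, hyB, hAB⟩ := isOpen_prod_iff.mp hO x y hxyO
      obtain ⟨m, hnm, hVA⟩ := hfine x A (hA.mem_nhds hxA) n
      have hOB : IsOpen (V m y ∩ B) := (hVopen m y).inter hB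
      have hne : (V m y ∩ B).Nonempty := ⟨y, hVmem m y, hyB⟩
      obtain ⟨p, hp1, hp2⟩ := (hDmd m).inter_open_nonempty _ hOB hne
      obtain ⟨d, hdDm, hpd⟩ := mem_iUnion₂.mp hp2
      have hdD : d ∈ D := mem_iUnion.mpr ⟨m, hdDm⟩
      have hΦy : (⟨m, ⟨d, hdD⟩⟩ : ℕ × ↥D) ∈ Φ y := ⟨p, hpd, hp1.1⟩
      rw [← hxy] at hΦy
      obtain ⟨q, hqd, hqx⟩ := hΦy
      refine ⟨(q, p), hAB ⟨hVA hqx, hp1.2⟩, hwanti hnm (hVsq m d ⟨hqd, hpd⟩)⟩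
    exact hclsub hmem
  calc #X ≤ #(Set (ℕ × ↥D)) := Cardinal.mk_le_of_injective hinj
    _ = 2 ^ #(ℕ × ↥D) := Cardinal.mk_set
    _ ≤ 2 ^ (ℵ₀ : Cardinal.{u}) :=
        Cardinal.power_le_power_left two_ne_zero Cardinal.mk_le_aleph0
end

section
/- If X is a Urysohn space, then |X| ≤ aL(X)^(Δ̄(X)). Equivalently: if X is Urysohn with a regular G_κ-diagonal and aL(X) ≤ τ, then |X| ≤ τ^κ. -/
open Set Cardinal

universe u

theorem statement13 {X : Type u} [TopologicalSpace X] [T1Space X] (hX : IsUrysohn X)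
    (κ τ : Cardinal.{u}) (hκ : ℵ₀ ≤ κ) (hτ : ℵ₀ ≤ τ)
    (hd : HasRegularGDiagonal X κ) (ha : AlmostLindelofLE X τ) :
    #X ≤ τ ^ κ := by
  obtain ⟨ι, W, hι, hWopen, hW1, hW2⟩ := hd
  set 𝒰 : ι → Set (Set X) := fun i => {U | IsOpen U ∧ U ×ˢ U ⊆ W i} with h𝒰
  have hcov : ∀ i, IsOpenCover (𝒰 i) := by
    intro i
    refine ⟨fun U hU => hU.1, eq_univ_of_forall fun x => ?_⟩
    have hxx : (x, x) ∈ W i := by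
      have hmem : (x, x) ∈ Set.diagonal X := rfl
      rw [hW1] at hmem
      exact mem_iInter.mp hmem i
    obtain ⟨u, v, hu, hv, hxu, hxv, huv⟩ := isOpen_prod_iff.mp (hWopen i) x x hxx
    exact mem_sUnion.mpr ⟨u ∩ v, ⟨hu.inter hv, fun p hp => huv ⟨hp.1.1, hp.2.2⟩⟩,
      hxu, hxv⟩
  choose 𝒱 h𝒱sub h𝒱card h𝒱cl using fun i => ha (𝒰 i) (hcov i)
  have hpick : ∀ (x : X) (i : ι), ∃ U ∈ 𝒱 i, x ∈ closure U := by
    intro x i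
    have hx : x ∈ ⋃ U ∈ 𝒱 i, closure U := (h𝒱cl i) ▸ mem_univ x
    simpa using hx
  choose f hf1 hf2 using hpick
  have hinj : Function.Injective
      (fun x : X => fun i : ι => (⟨f x i, hf1 x i⟩ : ↥(𝒱 i))) := by
    intro x y hxy
    by_contra hne
    have hxy' : (x, y) ∉ Set.diagonal X := fun h => hne h
    rw [hW2] at hxy'
    simp only [mem_iInter, not_forall] at hxy'
    obtain ⟨i, hi⟩ := hxy'
    have hfe : f x i = f y i := congrArg Subtype.val (congrFun hxy i)
    have hUW : (f x i) ×ˢ (f x i) ⊆ W i := (h𝒱sub i (hf1 x i)).2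
    have : (x, y) ∈ closure (W i) := by
      have h1 : (x, y) ∈ closure (f x i) ×ˢ closure (f x i) :=
        ⟨hf2 x i, hfe ▸ hf2 y i⟩
      rw [← closure_prod_eq] at h1
      exact closure_mono hUW h1
    exact hi this
  have hτ0 : τ ≠ 0 := (Cardinal.aleph0_pos.trans_le hτ).ne'
  calc #X ≤ #(∀ i, ↥(𝒱 i)) := Cardinal.mk_le_of_injective hinj
    _ = Cardinal.prod (fun i => #(𝒱 i)) := Cardinal.mk_pi _
    _ ≤ Cardinal.prod (fun _ : ι => τ) :=
        Cardinal.prod_le_prod _ _ (fun i => h𝒱card i)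
    _ = τ ^ #ι := Cardinal.prod_const' ι τ
    _ ≤ τ ^ κ := Cardinal.power_le_power_left hτ0 hι
end

section
/- If X is a Urysohn space with a regular G_δ-diagonal, then |X| ≤ aL(X)^ω, where aL(X) is the almost Lindelöf number. -/
/-!
For each `n`, cover `X` by open sets `U` with `U ×ˢ U ⊆ W n` and keep `≤ τ` of them whose
closures still cover `X`. As `closure U ×ˢ closure U = closure (U ×ˢ U) ⊆ closure (W n)` and the
closures `closure (W n)` meet in the diagonal, for distinct points there is an `n` such that no
kept set for `n` has both in its closure. So choosing, for every `n`, a kept set whose closure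
contains `x` is an injection of `X` into a countable product of sets of size `≤ τ`.
-/

open Set Cardinal

universe u

theorem mk_le_prod_of_separating {X ι : Type u} (𝒞 : ι → Set (Set X))
    (hcov : ∀ i, ⋃₀ 𝒞 i = Set.univ) (hsep : ∀ x y, x ≠ y → ∃ i, ∀ C ∈ 𝒞 i, x ∈ C → y ∉ C) :
    #X ≤ Cardinal.prod fun i => #(𝒞 i) := by
  have hmem : ∀ x i, ∃ C : 𝒞 i, x ∈ (C : Set X) := fun x i => by
    obtain ⟨C, hC, hxC⟩ := mem_sUnion.1 (hcov i ▸ mem_univ x)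
    exact ⟨⟨C, hC⟩, hxC⟩
  choose f hf using hmem
  have hf_inj : Function.Injective f := by
    intro x y hxy
    by_contra hne
    obtain ⟨i, hi⟩ := hsep x y hne
    exact hi _ (f x i).2 (hf x i) (hxy ▸ hf y i)
  exact (mk_le_of_injective hf_inj).trans_eq (mk_pi _)

section Topology

variable {X : Type u} [TopologicalSpace X]

theorem exists_isOpen_prod_self_subset {W : Set (X × X)} (hW : IsOpen W) {z : X}
    (hz : (z, z) ∈ W) : ∃ u : Set X, IsOpen u ∧ z ∈ u ∧ u ×ˢ u ⊆ W := by
  obtain ⟨u, v, hu, hv, hzu, hzv, huv⟩ := isOpen_prod_iff.1 hW z z hz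
  exact ⟨u ∩ v, hu.inter hv, ⟨hzu, hzv⟩, fun p hp => huv ⟨hp.1.1, hp.2.2⟩⟩

theorem isOpenCover_range {U : X → Set X} (hU : ∀ x, IsOpen (U x)) (hxU : ∀ x, x ∈ U x) :
    IsOpenCover (range U) :=
  ⟨forall_mem_range.2 hU, eq_univ_of_forall fun x => mem_sUnion_of_mem (hxU x) (mem_range_self x)⟩

theorem exists_forall_notMem_closure_of_prod_self_subset {ι : Type*} {W : ι → Set (X × X)}
    (hW : diagonal X = ⋂ i, closure (W i)) {x y : X} (hxy : x ≠ y) :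
    ∃ i, ∀ V : Set X, V ×ˢ V ⊆ W i → x ∈ closure V → y ∉ closure V := by
  have hxy' : (x, y) ∉ ⋂ i, closure (W i) := hW ▸ hxy
  obtain ⟨i, hi⟩ := not_forall.1 (mt mem_iInter.2 hxy')
  refine ⟨i, fun V hVW hx hy => hi (closure_mono hVW ?_)⟩
  rw [closure_prod_eq]
  exact ⟨hx, hy⟩

end Topology

theorem statement14_general {X : Type u} [TopologicalSpace X]
    (τ : Cardinal.{u}) (hτ : ℵ₀ ≤ τ)
    (hd : HasRegularGDiagonal X ℵ₀) (ha : AlmostLindelofLE X τ) :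
    #X ≤ τ ^ (ℵ₀ : Cardinal.{u}) := by
  obtain ⟨ι, W, hι, hWo, hΔW, hΔcl⟩ := hd
  have hsq : ∀ i z, ∃ u : Set X, IsOpen u ∧ z ∈ u ∧ u ×ˢ u ⊆ W i := fun i z =>
    exists_isOpen_prod_self_subset (hWo i) (mem_iInter.1 (hΔW ▸ mem_diagonal z) i)
  choose U hUo hzU hUW using hsq
  choose 𝒱 h𝒱U h𝒱τ h𝒱cov using fun i => ha _ (isOpenCover_range (hUo i) (hzU i))
  have hcov : ∀ i, ⋃₀ (closure '' 𝒱 i) = Set.univ := fun i => by rw [sUnion_image]; exact h𝒱cov i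
  have hsep : ∀ x y, x ≠ y → ∃ i, ∀ C ∈ closure '' 𝒱 i, x ∈ C → y ∉ C := by
    intro x y hxy
    obtain ⟨i, hi⟩ := exists_forall_notMem_closure_of_prod_self_subset hΔcl hxy
    refine ⟨i, ?_⟩
    rintro _ ⟨V, hV, rfl⟩
    obtain ⟨z, rfl⟩ := h𝒱U i hV
    exact hi _ (hUW i z)
  calc #X ≤ Cardinal.prod fun i => #(closure '' 𝒱 i) := mk_le_prod_of_separating _ hcov hsep
    _ ≤ Cardinal.prod fun _ : ι => τ := prod_le_prod _ _ fun i => mk_image_le.trans (h𝒱τ i)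
    _ = τ ^ #ι := prod_const' ι τ
    _ ≤ τ ^ ℵ₀ := power_le_power_left (aleph0_pos.trans_le hτ).ne' hι

theorem statement14 {X : Type u} [TopologicalSpace X] [T1Space X] (hX : IsUrysohn X)
    (τ : Cardinal.{u}) (hτ : ℵ₀ ≤ τ)
    (hd : HasRegularGDiagonal X ℵ₀) (ha : AlmostLindelofLE X τ) :
    #X ≤ τ ^ (ℵ₀ : Cardinal.{u}) :=
  statement14_general τ hτ hd ha
end

section
/- Every almost Lindelöf Urysohn space with a regular G_δ-diagonal has cardinality at most 2^ω. -/
open Set Cardinal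

universe u

theorem statement15 {X : Type u} [TopologicalSpace X] [T1Space X] (hX : IsUrysohn X)
    (hd : HasRegularGDiagonal X ℵ₀) (ha : AlmostLindelofLE X ℵ₀) :
    #X ≤ 2 ^ (ℵ₀ : Cardinal.{u}) := by
  obtain ⟨ι, W, hι, hWopen, hΔ1, hΔ2⟩ := hd
  have hS : ∀ (i : ι) (x : X), ∃ s : Set X, IsOpen s ∧ x ∈ s ∧ s ×ˢ s ⊆ W i := by
    intro i x
    have hx : (x, x) ∈ W i := by
      have h : (x, x) ∈ Set.diagonal X := rfl
      rw [hΔ1] at h; exact mem_iInter.mp h i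
    obtain ⟨u, v, hu, hv, hxu, hxv, huv⟩ := (isOpen_prod_iff.mp (hWopen i)) x x hx
    exact ⟨u ∩ v, hu.inter hv, ⟨hxu, hxv⟩, fun p hp => huv ⟨hp.1.1, hp.2.2⟩⟩
  choose S hSopen hSmem hSsub using hS
  have hcov : ∀ i, IsOpenCover (Set.range (S i)) := by
    intro i
    refine ⟨?_, ?_⟩
    · rintro U ⟨x, rfl⟩; exact hSopen i x
    · exact eq_univ_of_forall fun x => ⟨S i x, ⟨x, rfl⟩, hSmem i x⟩
  choose 𝒱 h𝒱sub h𝒱card h𝒱cl using fun i => ha _ (hcov i)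
  have hιc : Countable ι := mk_le_aleph0_iff.mp hι
  set T : Set (Set X) := ⋃ i, 𝒱 i with hT
  have hTc : T.Countable := countable_iUnion fun i => mk_le_aleph0_iff.mp (h𝒱card i)
  let f : X → Set (ι × T) := fun x => {p | (p.2 : Set X) ∈ 𝒱 p.1 ∧ x ∈ closure (p.2 : Set X)}
  have hf : Function.Injective f := by
    intro x y hxy
    by_contra hne
    have hxyΔ : (x, y) ∉ Set.diagonal X := hne
    rw [hΔ2] at hxyΔ
    simp only [mem_iInter, not_forall] at hxyΔ
    obtain ⟨i, hi⟩ := hxyΔ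
    have hxU : x ∈ ⋃ U ∈ 𝒱 i, closure U := (h𝒱cl i).symm ▸ mem_univ x
    simp only [mem_iUnion] at hxU
    obtain ⟨U, hU, hxUc⟩ := hxU
    have hUT : U ∈ T := mem_iUnion.mpr ⟨i, hU⟩
    have hy : (i, (⟨U, hUT⟩ : T)) ∈ f y := by
      rw [← hxy]; exact ⟨hU, hxUc⟩
    obtain ⟨a, ha'⟩ := h𝒱sub i hU
    have hsub : closure U ×ˢ closure U ⊆ closure (W i) := by
      rw [← closure_prod_eq]
      exact closure_mono (ha' ▸ hSsub i a)
    exact hi (hsub ⟨hxUc, hy.2⟩)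
  have h1 : #X ≤ #(Set (ι × T)) := mk_le_of_injective hf
  refine h1.trans ?_
  rw [mk_set]
  refine power_le_power_left (by norm_num) ?_
  rw [mk_prod]
  simp only [lift_id]
  calc #ι * #T ≤ ℵ₀ * ℵ₀ := mul_le_mul' hι (mk_le_aleph0_iff.mpr hTc.to_subtype)
    _ = ℵ₀ := aleph0_mul_aleph0
end

section
/- For every topological space X, the weak Lindelöf number satisfies wL(X) ≤ c(X), i.e., every open cover of X has a subfamily of size at most c(X) whose union is dense in X. -/
open Set Cardinal

universe u

theorem statement17 {X : Type u} [TopologicalSpace X] (κ : Cardinal.{u}) (hκ : ℵ₀ ≤ κ)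
    (hc : CellularityLE X κ) : WeakLindelofLE X κ := by
  
  intro 𝒰 h𝒰
  -- candidate families: pairwise disjoint families of nonempty open sets refined by 𝒰
  set S : Set (Set (Set X)) :=
    {𝒞 | (∀ V ∈ 𝒞, IsOpen V ∧ V.Nonempty ∧ ∃ U ∈ 𝒰, V ⊆ U) ∧ 𝒞.PairwiseDisjoint id} with hS
  obtain ⟨𝒞, h𝒞max⟩ : ∃ 𝒞, Maximal (· ∈ S) 𝒞 := by
    apply zorn_subset
    intro c hcS hchain
    refine ⟨⋃₀ c, ⟨?_, ?_⟩, fun s hs => subset_sUnion_of_mem hs⟩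
    · rintro V ⟨t, htc, hVt⟩
      exact (hcS htc).1 V hVt
    · intro V hV W hW hVW
      obtain ⟨t, htc, hVt⟩ := hV
      obtain ⟨t', ht'c, hWt'⟩ := hW
      rcases hchain.total htc ht'c with h | h
      · exact (hcS ht'c).2 (h hVt) hWt' hVW
      · exact (hcS htc).2 hVt (h hWt') hVW
  have h𝒞 := h𝒞max.1
  -- choose a member of 𝒰 containing each element of 𝒞
  choose! f hf𝒰 hfsub using fun V (hV : V ∈ 𝒞) => (h𝒞.1 V hV).2.2
  refine ⟨f '' 𝒞, ?_, ?_, ?_⟩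
  · rintro U ⟨V, hV, rfl⟩; exact hf𝒰 V hV
  · exact le_trans mk_image_le ((hc 𝒞 (fun V hV => ⟨(h𝒞.1 V hV).1, (h𝒞.1 V hV).2.1⟩) h𝒞.2).trans le_rfl)
  · -- density via maximality
    have hsub : ⋃₀ 𝒞 ⊆ ⋃₀ (f '' 𝒞) := by
      rintro x ⟨V, hV, hxV⟩
      exact ⟨f V, ⟨V, hV, rfl⟩, hfsub V hV hxV⟩
    rw [dense_iff_inter_open]
    intro O hO ⟨x, hxO⟩
    by_contra hemp
    rw [not_nonempty_iff_eq_empty] at hemp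
    -- O is disjoint from ⋃₀ 𝒞
    have hOC : O ∩ ⋃₀ 𝒞 = ∅ :=
      eq_empty_of_subset_empty (hemp ▸ inter_subset_inter_right O hsub)
    obtain ⟨U, hU𝒰, hxU⟩ : ∃ U ∈ 𝒰, x ∈ U := by
      have := h𝒰.2 ▸ mem_univ x
      simpa [Set.mem_sUnion] using (h𝒰.2.symm ▸ mem_univ x : x ∈ ⋃₀ 𝒰)
    set W := O ∩ U with hW
    have hWne : W.Nonempty := ⟨x, hxO, hxU⟩
    have hWdisj : ∀ V ∈ 𝒞, Disjoint W V := by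
      intro V hV
      rw [Set.disjoint_left]
      intro y hyW hyV
      have : y ∈ O ∩ ⋃₀ 𝒞 := ⟨hyW.1, V, hV, hyV⟩
      simp [hOC] at this
    have hWnot : W ∉ 𝒞 := by
      intro hWmem
      obtain ⟨y, hy⟩ := hWne
      exact Set.disjoint_left.1 (hWdisj W hWmem) hy hy
    have hins : insert W 𝒞 ∈ S := by
      constructor
      · rintro V (rfl | hV)
        · exact ⟨hO.inter (h𝒰.1 U hU𝒰), hWne, U, hU𝒰, inter_subset_right⟩
        · exact h𝒞.1 V hV
      · apply h𝒞.2.insert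
        intro V hV _
        exact hWdisj V hV
    have := h𝒞max.2 hins (subset_insert W 𝒞)
    exact hWnot (this (mem_insert W 𝒞))
end
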